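/- Case-completion preserves reduction: in the lambda calculus with constructors, if t reduces to u in one step, then the case-completion ⌈t⌉ reduces to ⌈u⌉; consequently, if ⌈t⌉ is a normal form then t is a normal form. -/

import Mathlib

/- Terms of the lambda calculus with `n` constructors (de Bruijn indices).
`Ob n` plays the role of `Option (Tm n)`: a case-binding is a partial map
`Fin n → Ob n` from constructors to terms. -/
mutual
inductive Tm (n : ℕ) : Type where
  | var : ℕ → Tm n
  | app : Tm n → Tm n → Tm n
  | lam : Tm n → Tm n
  | cst : Fin n → Tm n
  | cas : (Fin n → Ob n) → Tm n → Tm n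
inductive Ob (n : ℕ) : Type where
  | none : Ob n
  | some : Tm n → Ob n
end

namespace LC

variable {n : ℕ}

/- Shift free de Bruijn indices `≥ k` by `d`. -/
mutual
def lift (d k : ℕ) : Tm n → Tm n
  | .var i => .var (if i < k then i else i + d)
  | .app t u => .app (lift d k t) (lift d k u)
  | .lam t => .lam (lift d (k+1) t)
  | .cst c => .cst c
  | .cas θ t => .cas (fun c => liftO d k (θ c)) (lift d k t)
def liftO (d k : ℕ) : Ob n → Ob n
  | .none => .none
  | .some t => .some (lift d k t)
end

/- Lift a case-binding (used for the CaseLam rule, where the bound variable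
must not occur free in the binding). -/
def liftB (θ : Fin n → Ob n) : Fin n → Ob n := fun c => liftO 1 0 (θ c)

/- Substitution of `u` for the variable `k` (capture-avoiding). -/
mutual
def subst (u : Tm n) (k : ℕ) : Tm n → Tm n
  | .var i => if i < k then .var i else if i = k then lift k 0 u else .var (i-1)
  | .app t v => .app (subst u k t) (subst u k v)
  | .lam t => .lam (subst u (k+1) t)
  | .cst c => .cst c
  | .cas θ t => .cas (fun c => substO u k (θ c)) (subst u k t)
def substO (u : Tm n) (k : ℕ) : Ob n → Ob n
  | .none => .none
  | .some t => .some (subst u k t)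
end

/- `{θ}·(-)` applied inside an optional branch. -/
def casO (θ : Fin n → Ob n) : Ob n → Ob n
  | .none => .none
  | .some u => .some (.cas θ u)

/- Composition of case-bindings: `(θ∘φ)(c) = {θ}·φ(c)` for `c ∈ dom φ`. -/
def compB (θ φ : Fin n → Ob n) : Fin n → Ob n := fun c => casO θ (φ c)

/- One-step reduction of the lambda calculus with constructors:
AppLam, LamApp, CaseCons, CaseApp, CaseLam, CaseCase, closed under all contexts. -/
inductive Step : Tm n → Tm n → Prop where
  | appLam (t u : Tm n) : Step (.app (.lam t) u) (subst u 0 t)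
  | lamApp (t : Tm n) : Step (.lam (.app (lift 1 0 t) (.var 0))) t
  | caseCons (θ : Fin n → Ob n) (c : Fin n) (u : Tm n) :
      θ c = .some u → Step (.cas θ (.cst c)) u
  | caseApp (θ : Fin n → Ob n) (t u : Tm n) :
      Step (.cas θ (.app t u)) (.app (.cas θ t) u)
  | caseLam (θ : Fin n → Ob n) (t : Tm n) :
      Step (.cas θ (.lam t)) (.lam (.cas (liftB θ) t))
  | caseCase (θ φ : Fin n → Ob n) (t : Tm n) :
      Step (.cas θ (.cas φ t)) (.cas (compB θ φ) t)
  | appL {t t' : Tm n} (u : Tm n) : Step t t' → Step (.app t u) (.app t' u)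
  | appR (t : Tm n) {u u' : Tm n} : Step u u' → Step (.app t u) (.app t u')
  | lamC {t t' : Tm n} : Step t t' → Step (.lam t) (.lam t')
  | casT (θ : Fin n → Ob n) {t t' : Tm n} : Step t t' → Step (.cas θ t) (.cas θ t')
  | casB (θ : Fin n → Ob n) (c : Fin n) {u u' : Tm n} (t : Tm n) :
      θ c = .some u → Step u u' →
      Step (.cas θ t) (.cas (Function.update θ c (.some u')) t)

/- One-step reduction by the CaseCase rule only (closed under all contexts). -/
inductive StepCC : Tm n → Tm n → Prop where
  | caseCase (θ φ : Fin n → Ob n) (t : Tm n) :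
      StepCC (.cas θ (.cas φ t)) (.cas (compB θ φ) t)
  | appL {t t' : Tm n} (u : Tm n) : StepCC t t' → StepCC (.app t u) (.app t' u)
  | appR (t : Tm n) {u u' : Tm n} : StepCC u u' → StepCC (.app t u) (.app t u')
  | lamC {t t' : Tm n} : StepCC t t' → StepCC (.lam t) (.lam t')
  | casT (θ : Fin n → Ob n) {t t' : Tm n} : StepCC t t' → StepCC (.cas θ t) (.cas θ t')
  | casB (θ : Fin n → Ob n) (c : Fin n) {u u' : Tm n} (t : Tm n) :
      θ c = .some u → StepCC u u' →
      StepCC (.cas θ t) (.cas (Function.update θ c (.some u')) t)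

/- One-step reduction λC⁻ : every rule except CaseCase (closed under all contexts). -/
inductive StepM : Tm n → Tm n → Prop where
  | appLam (t u : Tm n) : StepM (.app (.lam t) u) (subst u 0 t)
  | lamApp (t : Tm n) : StepM (.lam (.app (lift 1 0 t) (.var 0))) t
  | caseCons (θ : Fin n → Ob n) (c : Fin n) (u : Tm n) :
      θ c = .some u → StepM (.cas θ (.cst c)) u
  | caseApp (θ : Fin n → Ob n) (t u : Tm n) :
      StepM (.cas θ (.app t u)) (.app (.cas θ t) u)
  | caseLam (θ : Fin n → Ob n) (t : Tm n) :
      StepM (.cas θ (.lam t)) (.lam (.cas (liftB θ) t))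
  | appL {t t' : Tm n} (u : Tm n) : StepM t t' → StepM (.app t u) (.app t' u)
  | appR (t : Tm n) {u u' : Tm n} : StepM u u' → StepM (.app t u) (.app t u')
  | lamC {t t' : Tm n} : StepM t t' → StepM (.lam t) (.lam t')
  | casT (θ : Fin n → Ob n) {t t' : Tm n} : StepM t t' → StepM (.cas θ t) (.cas θ t')
  | casB (θ : Fin n → Ob n) (c : Fin n) {u u' : Tm n} (t : Tm n) :
      θ c = .some u → StepM u u' →
      StepM (.cas θ t) (.cas (Function.update θ c (.some u')) t)

/- A term is defined when none of its subterms is a match failure `{θ}·c` with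
`c ∉ dom θ`. -/
inductive Defined : Tm n → Prop where
  | var (i : ℕ) : Defined (.var i)
  | cst (c : Fin n) : Defined (.cst c)
  | app {t u : Tm n} : Defined t → Defined u → Defined (.app t u)
  | lam {t : Tm n} : Defined t → Defined (.lam t)
  | cas {θ : Fin n → Ob n} {t : Tm n} :
      (∀ c u, θ c = .some u → Defined u) → Defined t →
      (∀ c, t = .cst c → θ c ≠ .none) → Defined (.cas θ t)

/- Hereditarily defined: every reduct (in any number of steps) is defined. -/
def HD (t : Tm n) : Prop := ∀ u, Relation.ReflTransGen Step t u → Defined u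

section Completion
variable [NeZero n]

/- The canonical match failure `{}·c₁` used to fill missing branches. -/
def failTm : Tm n := .cas (fun _ => .none) (.cst 0)

/- Case-completion: replace every case-binding by its total completion,
filling each missing branch with `{}·c₁`. -/
mutual
def cpl : Tm n → Tm n
  | .var i => .var i
  | .app t u => .app (cpl t) (cpl u)
  | .lam t => .lam (cpl t)
  | .cst c => .cst c
  | .cas θ t => .cas (fun c => .some (cplO (θ c))) (cpl t)
def cplO : Ob n → Tm n
  | .none => failTm
  | .some u => cpl u
end

end Completion

/- The structural measure μ. -/
mutual
def mes : Tm n → ℕ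
  | .var _ => 1
  | .cst _ => 1
  | .lam t => mes t + 1
  | .app t u => mes t + mes u
  | .cas θ t => mes t * ((∑ c : Fin n, mesO (θ c)) + 2)
def mesO : Ob n → ℕ
  | .none => 0
  | .some t => mes t
end

end LC

/-! Case-completion commutes with lifting and substitution, so each rule other than CaseCase
is simulated by a single step on completed terms. For CaseCase, `{⌈θ⌉}·({⌈φ⌉}·t)` steps to
`{⌈θ⌉∘⌈φ⌉}·t`, which differs from `⌈{θ∘φ}·t⌉` only at constructors outside `dom φ`: there the
branch is `{⌈θ⌉}·({}·c₁)` instead of `{}·c₁`, and one more CaseCase step in each such branch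
closes the gap. -/

namespace LC

variable {n : ℕ}

theorem transGen_cas_update (θ : Fin n → Ob n) (c : Fin n) {a b : Tm n} (t : Tm n)
    (ha : θ c = .some a) (hab : Relation.TransGen Step a b) :
    Relation.TransGen Step (.cas θ t) (.cas (Function.update θ c (.some b)) t) := by
  induction hab with
  | single h => exact .single (.casB θ c t ha h)
  | tail _ h ih =>
      have h' := Step.casB _ c t (Function.update_self c _ θ) h
      rw [Function.update_idem] at h'
      exact ih.tail h'

theorem reflTransGen_cas_of_branchwise (t : Tm n) (θ₁ θ₂ : Fin n → Ob n)
    (h : ∀ c, θ₁ c = θ₂ c ∨ ∃ a b, θ₁ c = .some a ∧ θ₂ c = .some b ∧ Step a b) :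
    Relation.ReflTransGen Step (.cas θ₁ t) (.cas θ₂ t) := by
  classical
  suffices ∀ s : Finset (Fin n),
      Relation.ReflTransGen Step (.cas θ₁ t) (.cas (s.piecewise θ₂ θ₁) t) by
    simpa using this Finset.univ
  intro s
  induction s using Finset.induction_on with
  | empty => rw [Finset.piecewise_empty]
  | @insert c s hcs ih =>
      rw [Finset.piecewise_insert]
      rcases h c with heq | ⟨a, b, ha, hb, hab⟩
      · rwa [← heq, ← Finset.piecewise_eq_of_notMem s θ₂ θ₁ hcs, Function.update_eq_self]
      · rw [hb]
        refine ih.tail (.casB _ c t ?_ hab)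
        rw [Finset.piecewise_eq_of_notMem s θ₂ θ₁ hcs, ha]

section Completion

variable [NeZero n]

/-- The total completion `⌈θ⌉` of a case-binding. -/
def cplB (θ : Fin n → Ob n) : Fin n → Ob n := fun c => .some (cplO (θ c))

theorem cpl_cas (θ : Fin n → Ob n) (t : Tm n) : cpl (.cas θ t) = .cas (cplB θ) (cpl t) := by
  rw [cpl]; rfl

mutual
theorem cpl_lift (d k : ℕ) : (t : Tm n) → cpl (lift d k t) = lift d k (cpl t)
  | .var i => by simp [lift, cpl]
  | .app t u => by simp [lift, cpl, cpl_lift d k t, cpl_lift d k u]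
  | .lam t => by simp [lift, cpl, cpl_lift d (k+1) t]
  | .cst c => by simp [lift, cpl]
  | .cas θ t => by
      simp only [lift, cpl, liftO, cpl_lift d k t]
      congr 1
      funext c
      rw [cplO_lift d k (θ c)]
theorem cplO_lift (d k : ℕ) : (o : Ob n) → cplO (liftO d k o) = lift d k (cplO o)
  | .none => by simp [liftO, cplO, failTm, lift]
  | .some t => by simp [liftO, cplO, cpl_lift d k t]
end

mutual
theorem cpl_subst (u : Tm n) (k : ℕ) : (t : Tm n) → cpl (subst u k t) = subst (cpl u) k (cpl t)
  | .var i => by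
      simp only [subst, cpl]
      split_ifs <;> simp [cpl, cpl_lift]
  | .app t v => by simp [subst, cpl, cpl_subst u k t, cpl_subst u k v]
  | .lam t => by simp [subst, cpl, cpl_subst u (k+1) t]
  | .cst c => by simp [subst, cpl]
  | .cas θ t => by
      simp only [subst, cpl, substO, cpl_subst u k t]
      congr 1
      funext c
      rw [cplO_subst u k (θ c)]
theorem cplO_subst (u : Tm n) (k : ℕ) :
    (o : Ob n) → cplO (substO u k o) = subst (cpl u) k (cplO o)
  | .none => by simp [substO, cplO, failTm, subst]
  | .some t => by simp [substO, cplO, cpl_subst u k t]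
end

theorem liftB_cplB (θ : Fin n → Ob n) : liftB (cplB θ) = cplB (liftB θ) :=
  funext fun c => by simp [liftB, cplB, liftO, cplO_lift]

theorem cplB_update (θ : Fin n → Ob n) (c : Fin n) (u : Tm n) :
    cplB (Function.update θ c (.some u)) = Function.update (cplB θ) c (.some (cpl u)) :=
  Function.comp_update (fun o => Ob.some (cplO o)) θ c (.some u)

theorem step_cas_failTm (θ : Fin n → Ob n) : Step (.cas θ failTm) (failTm (n := n)) :=
  Step.caseCase θ (fun _ => .none) (.cst 0)

theorem compB_cplB_eq_or_step (θ φ : Fin n → Ob n) (c : Fin n) :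
    compB (cplB θ) (cplB φ) c = cplB (compB θ φ) c ∨
      ∃ a b, compB (cplB θ) (cplB φ) c = .some a ∧ cplB (compB θ φ) c = .some b ∧ Step a b := by
  cases hφ : φ c with
  | some v => left; simp [compB, cplB, casO, hφ, cplO, cpl_cas]
  | none =>
      right
      refine ⟨.cas (cplB θ) failTm, failTm, ?_, ?_, step_cas_failTm _⟩ <;>
        simp [compB, cplB, casO, hφ, cplO]

theorem transGen_cpl_of_step {t u : Tm n} (h : Step t u) :
    Relation.TransGen Step (cpl t) (cpl u) := by
  induction h with
  | appLam t u =>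
      rw [cpl_subst]
      exact .single (.appLam _ _)
  | lamApp t =>
      have h := Step.lamApp (cpl t)
      rw [← cpl_lift] at h
      exact .single h
  | caseCons θ c u hθ =>
      rw [cpl_cas]
      exact .single (.caseCons _ c _ (by simp [cplB, hθ, cplO]))
  | caseApp θ t u =>
      rw [cpl_cas, cpl, cpl, cpl_cas]
      exact .single (.caseApp _ _ _)
  | caseLam θ t =>
      rw [cpl_cas, cpl, cpl, cpl_cas, ← liftB_cplB]
      exact .single (.caseLam _ _)
  | caseCase θ φ t =>
      simp only [cpl_cas]
      exact Relation.TransGen.trans_left (.single (.caseCase _ _ _))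
        (reflTransGen_cas_of_branchwise _ _ _ (compB_cplB_eq_or_step θ φ))
  | appL u _ ih =>
      exact Relation.TransGen.lift (Tm.app · (cpl u)) (fun _ _ => Step.appL _) _ _ ih
  | appR t _ ih =>
      exact Relation.TransGen.lift (Tm.app (cpl t)) (fun _ _ => Step.appR _) _ _ ih
  | lamC _ ih =>
      exact Relation.TransGen.lift Tm.lam (fun _ _ => Step.lamC) _ _ ih
  | casT θ _ ih =>
      rw [cpl_cas, cpl_cas]
      exact Relation.TransGen.lift (Tm.cas _) (fun _ _ => Step.casT _) _ _ ih
  | casB θ c t hθ _ ih =>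
      rw [cpl_cas, cpl_cas, cplB_update]
      exact transGen_cas_update _ c _ (by simp [cplB, hθ, cplO]) ih

end Completion

/-- Case-completion preserves reduction: if `t` reduces to `u` in one step then
`⌈t⌉` reduces to `⌈u⌉`; consequently if `⌈t⌉` is a normal form then so is `t`. -/
theorem cpl_step {n : ℕ} [NeZero n] :
    (∀ t u : Tm n, Step t u → Relation.TransGen Step (cpl t) (cpl u)) ∧
    (∀ t : Tm n, (∀ u, ¬ Step (cpl t) u) → ∀ u, ¬ Step t u) := by
  refine ⟨fun _ _ => transGen_cpl_of_step, fun t hnf u h => ?_⟩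
  obtain ⟨v, hv, -⟩ := Relation.TransGen.head'_iff.mp (transGen_cpl_of_step h)
  exact hnf v hv

end LC
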